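/- arXiv:2110.01375 — 5 statements merged into one kernel-verified Lean document; each statement's English description precedes it below -/
import Mathlib

section
/- Let κ be an infinite cardinal, G = S_X^{<κ} the group of permutations of X with support of cardinality less than κ, and X_G the coarse space on X with base {E_F : F ⊆ G finite, id ∈ F}, E_F = {(x,gx) : g ∈ F, x ∈ X}. Then every permutation h of X is macro-uniform as a map X_G → X_G. -/
open Set

/-- Composition of two relations (as subsets of `X × X`). -/
def relComp {X : Type*} (s t : Set (X × X)) : Set (X × X) :=
  {p | ∃ z, (p.1, z) ∈ s ∧ (z, p.2) ∈ t}

/-- Inverse of a relation. -/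
def relInv {X : Type*} (s : Set (X × X)) : Set (X × X) := {p | (p.2, p.1) ∈ s}

/-- A coarse structure on `X`: a family of reflexive relations closed under
composition, inversion and reflexive subrelations, whose union is `X × X`. -/
structure IsCoarse {X : Type*} (𝓔 : Set (Set (X × X))) : Prop where
  refl : ∀ s ∈ 𝓔, ∀ x : X, (x, x) ∈ s
  comp : ∀ s ∈ 𝓔, ∀ t ∈ 𝓔, relComp s t ∈ 𝓔
  inv : ∀ s ∈ 𝓔, relInv s ∈ 𝓔
  subrel : ∀ s ∈ 𝓔, ∀ t, (∀ x : X, (x, x) ∈ t) → t ⊆ s → t ∈ 𝓔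
  cover : ∀ p : X × X, ∃ s ∈ 𝓔, p ∈ s

/-- The ball of radius `s` around `x`. -/
def ball {X : Type*} (s : Set (X × X)) (x : X) : Set X := {y | (x, y) ∈ s}

/-- A set is bounded if it is contained in some ball. -/
def IsBoundedIn {X : Type*} (𝓔 : Set (Set (X × X))) (B : Set X) : Prop :=
  ∃ s ∈ 𝓔, ∃ x : X, B ⊆ ball s x

/-- A bornology: closed under subsets and finite unions, contains all finite sets. -/
def IsBornology {X : Type*} (𝓑 : Set (Set X)) : Prop :=
  (∀ A ∈ 𝓑, ∀ B ⊆ A, B ∈ 𝓑) ∧ (∀ A ∈ 𝓑, ∀ B ∈ 𝓑, A ∪ B ∈ 𝓑) ∧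
    (∀ A : Set X, A.Finite → A ∈ 𝓑)

/-- The entourage `E_B = Δ_X ∪ (B × B)` of the discrete coarse space. -/
def EB {X : Type*} (B : Set X) : Set (X × X) :=
  {p | p.1 = p.2 ∨ (p.1 ∈ B ∧ p.2 ∈ B)}

/-- The discrete coarse structure defined by a bornology `𝓑`. -/
def discreteCoarse {X : Type*} (𝓑 : Set (Set X)) : Set (Set (X × X)) :=
  {s | (∀ x : X, (x, x) ∈ s) ∧ ∃ B ∈ 𝓑, s ⊆ EB B}

/-- `𝓔'` is a base for `𝓔`. -/
def IsBase {X : Type*} (𝓔' 𝓔 : Set (Set (X × X))) : Prop :=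
  𝓔' ⊆ 𝓔 ∧ ∀ s ∈ 𝓔, ∃ t ∈ 𝓔', s ⊆ t

/-- Discrete coarse space: outside some bounded set all balls are singletons. -/
def IsDiscreteCoarseSpace {X : Type*} (𝓔 : Set (Set (X × X))) : Prop :=
  ∀ s ∈ 𝓔, ∃ B : Set X, IsBoundedIn 𝓔 B ∧ ∀ x ∉ B, ball s x = {x}

/-- A self-map is bornologous if it sends bounded sets to bounded sets. -/
def Bornologous {X : Type*} (𝓔 : Set (Set (X × X))) (f : X → X) : Prop :=
  ∀ B : Set X, IsBoundedIn 𝓔 B → IsBoundedIn 𝓔 (f '' B)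

/-- A self-map is macro-uniform. -/
def MacroUniform {X : Type*} (𝓔 : Set (Set (X × X))) (f : X → X) : Prop :=
  ∀ s ∈ 𝓔, ∃ t ∈ 𝓔, ∀ x y : X, (x, y) ∈ s → (f x, f y) ∈ t

/-- The entourage determined by a finite set `F` of permutations. -/
def EF {X : Type*} (F : Finset (Equiv.Perm X)) : Set (X × X) :=
  {p | ∃ g ∈ F, p.2 = g p.1}

/-- The coarse structure on `X` generated by a set `G` of permutations of `X`
(with base the entourages `EF F`, `F ⊆ G` finite containing the identity). -/
def permCoarse {X : Type*} (G : Set (Equiv.Perm X)) : Set (Set (X × X)) :=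
  {s | (∀ x : X, (x, x) ∈ s) ∧
    ∃ F : Finset (Equiv.Perm X), ↑F ⊆ G ∧ (1 : Equiv.Perm X) ∈ F ∧ s ⊆ EF F}

/-- The support of a permutation. -/
def psupp {X : Type*} (g : Equiv.Perm X) : Set X := {x | g x ≠ x}

/-- Permutations of support of cardinality less than `κ`. -/
def SuppLT (X : Type*) (κ : Cardinal) : Set (Equiv.Perm X) :=
  {g | Cardinal.mk (psupp g) < κ}

/-- A permutation compatible with the coarse structure `𝓔`. -/
def Compatible {X : Type*} (𝓔 : Set (Set (X × X))) (g : Equiv.Perm X) : Prop :=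
  ∃ s ∈ 𝓔, ∀ x : X, (x, g x) ∈ s

/-- A finitary coarse space: uniformly bounded finite balls. -/
def Finitary {X : Type*} (𝓔 : Set (Set (X × X))) : Prop :=
  ∀ s ∈ 𝓔, ∃ n : ℕ, ∀ x : X, (ball s x).Finite ∧ (ball s x).ncard < n

/-- A locally finite coarse space: all balls finite. -/
def LocallyFinite' {X : Type*} (𝓔 : Set (Set (X × X))) : Prop :=
  ∀ s ∈ 𝓔, ∀ x : X, (ball s x).Finite

/-- A crowded subset: some entourage has nontrivial balls at all its points. -/
def Crowded {X : Type*} (𝓔 : Set (Set (X × X))) (Y : Set X) : Prop :=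
  ∃ s ∈ 𝓔, ∀ y ∈ Y, 1 < (ball s y).ncard

/-- An asymorphism: a permutation which is macro-uniform in both directions. -/
def IsAsymorphism {X : Type*} (𝓔 : Set (Set (X × X))) (h : Equiv.Perm X) : Prop :=
  MacroUniform 𝓔 h ∧ MacroUniform 𝓔 h.symm

/-!
A permutation `h` maps the entourage `E_F` into `E_{h F h⁻¹}`, since `h (g x) = (h g h⁻¹) (h x)`.
Conjugation moves supports by `h`, so it preserves their cardinality; hence `h F h⁻¹` is again
a finite subset of `S_X^{<κ}` containing the identity.
-/

section ConjInvariant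

variable {X : Type*}

lemma psupp_conj (h g : Equiv.Perm X) : psupp (h * g * h⁻¹) = h '' psupp g := by
  ext x
  rw [Equiv.image_eq_preimage_symm]
  simp only [psupp, Set.mem_ofPred_eq, Set.mem_preimage, Equiv.Perm.mul_apply,
    Equiv.Perm.inv_def, ne_eq, ← Equiv.eq_symm_apply]

lemma conj_mem_suppLT {κ : Cardinal} (h : Equiv.Perm X) {g : Equiv.Perm X}
    (hg : g ∈ SuppLT X κ) : h * g * h⁻¹ ∈ SuppLT X κ := by
  simpa only [SuppLT, Set.mem_ofPred_eq, psupp_conj, Cardinal.mk_image_eq h.injective] using hg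

lemma EF_mem_permCoarse {G : Set (Equiv.Perm X)} {F : Finset (Equiv.Perm X)}
    (hFG : ↑F ⊆ G) (hF1 : 1 ∈ F) : EF F ∈ permCoarse G :=
  ⟨fun _ => ⟨1, hF1, rfl⟩, F, hFG, hF1, subset_rfl⟩

lemma map_mem_EF_conj [DecidableEq (Equiv.Perm X)] (h : Equiv.Perm X)
    {F : Finset (Equiv.Perm X)} {x y : X} (hxy : (x, y) ∈ EF F) :
    (h x, h y) ∈ EF (F.image fun g => h * g * h⁻¹) := by
  obtain ⟨g, hg, rfl : y = g x⟩ := hxy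
  exact ⟨h * g * h⁻¹, Finset.mem_image_of_mem _ hg, by simp⟩

theorem macroUniform_permCoarse_of_conj_mem {G : Set (Equiv.Perm X)} (h : Equiv.Perm X)
    (hG : ∀ g ∈ G, h * g * h⁻¹ ∈ G) : MacroUniform (permCoarse G) h := by
  classical
  rintro s ⟨-, F, hFG, hF1, hsF⟩
  have hconjG : ↑(F.image fun g => h * g * h⁻¹) ⊆ G := by
    rw [Finset.coe_image]
    exact Set.image_subset_iff.2 fun g hg => hG g (hFG hg)
  have hconj1 : 1 ∈ F.image fun g => h * g * h⁻¹ := Finset.mem_image.2 ⟨1, hF1, by group⟩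
  exact ⟨_, EF_mem_permCoarse hconjG hconj1, fun x y hxy => map_mem_EF_conj h (hsF hxy)⟩

end ConjInvariant

theorem perm_macroUniform_suppLT_general {X : Type*} (κ : Cardinal)
    (h : Equiv.Perm X) :
    MacroUniform (permCoarse (SuppLT X κ)) h :=
  macroUniform_permCoarse_of_conj_mem h fun _ => conj_mem_suppLT h

theorem perm_macroUniform_suppLT {X : Type*} [Infinite X] (κ : Cardinal)
    (hκ : Cardinal.aleph0 ≤ κ) (h : Equiv.Perm X) :
    MacroUniform (permCoarse (SuppLT X κ)) h :=
  perm_macroUniform_suppLT_general κ h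
end

section
/- (3-Sets Lemma) For any permutation g of a set A with no fixed points, there exists a partition of A into three sets A₁, A₂, A₃ such that Aᵢ ∩ g(Aᵢ) = ∅ for i = 1, 2, 3. -/
open Set

/-- Discrete coarse space: outside some bounded set all balls are singletons. -/
def IsDiscrete' {X : Type*} (𝓔 : Set (Set (X × X))) : Prop :=
  ∀ s ∈ 𝓔, ∃ B : Set X, IsBoundedIn 𝓔 B ∧ ∀ x ∉ B, ball s x = {x}

/-!
Every orbit of `g` is a cycle on which `g` acts as `+ 1`: a copy of `ℤ` or of `ZMod n`, with
`n ≠ 1` because `g` has no fixed points. Such a cycle is coloured alternately by parity, except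
that an odd cycle needs a third colour at its last vertex. Fixing a base point in every orbit
assembles these colourings into `c : A → Fin 3` with `c (g a) ≠ c a`, and the three fibres of
`c` are the required sets.
-/

open Function MulAction Subgroup

namespace ZMod

/-- `ZMod 0 = ℤ` is the infinite cycle; `ZMod (n + 1) = Fin (n + 1)` is a cycle of length
`n + 1`. -/
def threeColoring : (n : ℕ) → ZMod n → Fin 3
  | 0, (k : ℤ) => if Even k then 0 else 1
  | n + 1, (k : Fin (n + 1)) =>
    if k = Fin.last n ∧ Even n then 2 else if Even (k : ℕ) then 0 else 1

theorem threeColoring_add_one_ne {n : ℕ} (hn : n ≠ 1) (k : ZMod n) :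
    threeColoring n (k + 1) ≠ threeColoring n k := by
  match n, k with
  | 0, (k : ℤ) =>
    change (if Even (k + 1) then (0 : Fin 3) else 1) ≠ if Even k then 0 else 1
    by_cases hk : Even k <;> simp [hk]
  | n + 1, (k : Fin (n + 1)) =>
    change (if k + 1 = Fin.last n ∧ Even n then (2 : Fin 3)
      else if Even ((k + 1 : Fin (n + 1)) : ℕ) then 0 else 1) ≠
      if k = Fin.last n ∧ Even n then 2 else if Even (k : ℕ) then 0 else 1
    have hn : n ≠ 0 := by omega
    rw [Fin.val_add_one]
    by_cases hk : k = Fin.last n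
    · subst hk
      split_ifs <;> simp_all [Fin.ext_iff, - Nat.not_even_iff_odd]
    · have : (k : ℕ) < n := Fin.val_lt_last hk
      split_ifs <;> simp_all [Nat.even_add_one, Fin.ext_iff]

end ZMod

namespace MulAction

theorem orbitZPowersEquiv_smul {α β : Type*} [Group α] [MulAction α β] (a : α) (b : β)
    (x : orbit (zpowers a) b) :
    orbitZPowersEquiv a b ((⟨a, mem_zpowers a⟩ : zpowers a) • x) =
      orbitZPowersEquiv a b x + 1 := by
  obtain ⟨k, rfl⟩ := (orbitZPowersEquiv a b).symm.surjective x
  have hk : k + 1 = ((1 + ZMod.cast k : ℤ) : ZMod _) := by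
    push_cast [ZMod.intCast_cast, ZMod.cast_id']
    exact add_comm _ _
  rw [Equiv.apply_symm_apply, ← Equiv.eq_symm_apply, hk, orbitZPowersEquiv_symm_apply',
    orbitZPowersEquiv_symm_apply, zpow_one_add, mul_smul]

end MulAction

theorem Set.preimage_singleton_inter_image_eq_empty {A κ : Type*} {f : A → A} {c : A → κ}
    (hc : ∀ a, c (f a) ≠ c a) (i : κ) : c ⁻¹' {i} ∩ f '' (c ⁻¹' {i}) = ∅ := by
  rw [eq_empty_iff_forall_notMem]
  rintro _ ⟨hfa, a, ha, rfl⟩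
  exact hc a (hfa.trans ha.symm)

namespace Equiv.Perm

variable {A : Type*}

theorem exists_coloring_of_forall_orbit {κ : Type*} (g : Perm A)
    (h : ∀ r : A, ∃ c : A → κ, ∀ a ∈ orbit (zpowers g) r, c (g a) ≠ c a) :
    ∃ c : A → κ, ∀ a, c (g a) ≠ c a := by
  choose c hc using h
  let base (a : A) : A := (Quotient.mk'' a : orbitRel.Quotient (zpowers g) A).out
  have base_apply (a : A) : base (g a) = base a :=
    congrArg Quotient.out (Quotient.sound (mem_orbit a (⟨g, mem_zpowers g⟩ : zpowers g)))
  refine ⟨fun a => c (base a) a, fun a => ?_⟩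
  simp only [base_apply]
  exact hc _ a (mem_orbit_symm.mp (Quotient.mk_out' (s₁ := orbitRel (zpowers g) A) a))

theorem exists_orbit_three_coloring (g : Perm A) (r : A) (hr : g r ≠ r) :
    ∃ c : A → Fin 3, ∀ a ∈ orbit (zpowers g) r, c (g a) ≠ c a := by
  classical
  have hperiod : minimalPeriod (g • ·) r ≠ 1 := minimalPeriod_eq_one_iff_fixedBy.not.mpr hr
  let e := orbitZPowersEquiv g r
  refine ⟨fun a => if h : a ∈ orbit (zpowers g) r then ZMod.threeColoring _ (e ⟨a, h⟩) else 0,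
    fun a ha => ?_⟩
  let gx := (⟨g, mem_zpowers g⟩ : zpowers g) • (⟨a, ha⟩ : orbit (zpowers g) r)
  have hga : g a ∈ orbit (zpowers g) r := gx.2
  simp only [dif_pos hga, dif_pos ha]
  rw [show ⟨g a, hga⟩ = gx from rfl, orbitZPowersEquiv_smul]
  exact ZMod.threeColoring_add_one_ne hperiod _

theorem exists_three_coloring (g : Perm A) (hg : ∀ a, g a ≠ a) :
    ∃ c : A → Fin 3, ∀ a, c (g a) ≠ c a :=
  exists_coloring_of_forall_orbit g fun r => exists_orbit_three_coloring g r (hg r)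

end Equiv.Perm

theorem three_sets_lemma {A : Type*} (g : Equiv.Perm A) (hg : ∀ a : A, g a ≠ a) :
    ∃ A₁ A₂ A₃ : Set A, A₁ ∪ A₂ ∪ A₃ = Set.univ ∧
      Disjoint A₁ A₂ ∧ Disjoint A₁ A₃ ∧ Disjoint A₂ A₃ ∧
      A₁ ∩ (g '' A₁) = ∅ ∧ A₂ ∩ (g '' A₂) = ∅ ∧ A₃ ∩ (g '' A₃) = ∅ := by
  obtain ⟨c, hc⟩ := g.exists_three_coloring hg
  refine ⟨c ⁻¹' {0}, c ⁻¹' {1}, c ⁻¹' {2}, ?_, ?_, ?_, ?_,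
    preimage_singleton_inter_image_eq_empty hc 0,
    preimage_singleton_inter_image_eq_empty hc 1,
    preimage_singleton_inter_image_eq_empty hc 2⟩
  · ext a
    simp only [mem_union, mem_preimage, mem_singleton_iff, mem_univ, iff_true]
    omega
  all_goals exact (disjoint_singleton.2 (by decide)).preimage c
end

section
/- Let (X, 𝓔) be an infinite finitary coarse space such that every permutation of X is an asymorphism. If g is a permutation of X compatible with 𝓔, then the support of g is a crowded subset of X, i.e., there exists E ∈ 𝓔 with |E[y]| > 1 for all y ∈ supp g. -/
open Set

theorem Finitary.locallyFinite {X : Type*} {𝓔 : Set (Set (X × X))} (hfin : Finitary 𝓔) :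
    LocallyFinite' 𝓔 := fun s hs x => by
  obtain ⟨_, hn⟩ := hfin s hs
  exact (hn x).1

theorem one_lt_ncard_ball {X : Type*} {s : Set (X × X)} {x y : X} (hfin : (ball s x).Finite)
    (hx : (x, x) ∈ s) (hy : (x, y) ∈ s) (hne : y ≠ x) : 1 < (ball s x).ncard :=
  (Set.one_lt_ncard_iff hfin).mpr ⟨y, x, hy, hx, hne⟩

theorem crowded_psupp_of_compatible {X : Type*} {𝓔 : Set (Set (X × X))}
    (hrefl : ∀ s ∈ 𝓔, ∀ x : X, (x, x) ∈ s) (hlf : LocallyFinite' 𝓔) {g : Equiv.Perm X}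
    (hg : Compatible 𝓔 g) : Crowded 𝓔 (psupp g) := by
  obtain ⟨s, hs, hsg⟩ := hg
  exact ⟨s, hs, fun y hy => one_lt_ncard_ball (hlf s hs y) (hrefl s hs y) (hsg y) hy⟩

theorem supp_crowded_of_compatible_general {X : Type*}
    (𝓔 : Set (Set (X × X))) (h : IsCoarse 𝓔) (hfin : Finitary 𝓔)
    (g : Equiv.Perm X) (hg : Compatible 𝓔 g) :
    Crowded 𝓔 (psupp g) :=
  crowded_psupp_of_compatible h.refl hfin.locallyFinite hg

theorem supp_crowded_of_compatible {X : Type*} [Infinite X]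
    (𝓔 : Set (Set (X × X))) (h : IsCoarse 𝓔) (hfin : Finitary 𝓔)
    (hasym : ∀ h : Equiv.Perm X, IsAsymorphism 𝓔 h)
    (g : Equiv.Perm X) (hg : Compatible 𝓔 g) :
    Crowded 𝓔 (psupp g) :=
  supp_crowded_of_compatible_general 𝓔 h hfin g hg
end

section
/- Let (X, 𝓔) be an infinite coarse space in which every permutation of X is macro-uniform, let Y ⊆ X with |Y| = |X|, and let λ be a cardinal such that X has two disjoint injective λ-sequences (a_α), (b_α) with (a_α, b_α) ∈ E for some fixed E ∈ 𝓔. Then there exist two injective λ-sequences (x_α), (y_α) in Y with {x_α} ∩ {y_α} = ∅ and an entourage H ∈ 𝓔 such that (x_α, y_α) ∈ H for all α < λ. -/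
open Set

/-!
A permutation `g` of `X` carrying a sequence of `E`-close pairs `(a_α, b_α)` onto a sequence of
pairs `(x_α, y_α)` in `Y` transports `E` to an entourage `H`, by macro-uniformity of `g`.
Such a permutation exists as soon as both families of pairs have complements of cardinality `|X|`:
in `Y ≅ X ⊕ X` the pairs can be placed in the first summand, and among the `(a_α, b_α)` one
keeps all pairs when `λ` is finite and half of them when `λ` is infinite.
-/

open Cardinal

lemma mk_compl_eq_of_mk_le_mk_compl {X : Type*} [Infinite X] {s : Set X}
    (hs : #s ≤ #(sᶜ : Set X)) : #(sᶜ : Set X) = #X := by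
  have hcompl : ℵ₀ ≤ #(sᶜ : Set X) := by
    by_contra! hlt
    have hX := (mk_sum_compl s).symm.trans_lt (add_lt_aleph0 (hs.trans_lt hlt) hlt)
    exact hX.not_ge (aleph0_le_mk X)
  rw [← mk_sum_compl s, add_eq_right hcompl hs]

lemma exists_perm_comp_eq {X I : Type*} {c d : I → X} (hc : Function.Injective c)
    (hd : Function.Injective d) (e : ↥(range c)ᶜ ≃ ↥(range d)ᶜ) :
    ∃ g : Equiv.Perm X, ∀ i, g (c i) = d i := by
  classical
  refine ⟨(Equiv.Set.sumCompl (range c)).symm.trans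
    ((Equiv.sumCongr ((Equiv.ofInjective c hc).symm.trans (Equiv.ofInjective d hd)) e).trans
      (Equiv.Set.sumCompl (range d))), fun i => ?_⟩
  simp [Equiv.Set.sumCompl_symm_apply_of_mem (mem_range_self i)]

lemma exists_injective_range_subset_mk_compl_eq {X J : Type*} [Infinite X] {Y : Set X}
    (hY : #Y = #X) {f : J → X} (hf : Function.Injective f) :
    ∃ d : J → X, Function.Injective d ∧ range d ⊆ Y ∧ #↥(range d)ᶜ = #X := by
  obtain ⟨e⟩ : Nonempty (Y ≃ X ⊕ X) := by
    rw [← Cardinal.eq, ← add_def, add_eq_self (aleph0_le_mk X), hY]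
  let d : J → X := fun j => e.symm (.inl (f j))
  have hd : Function.Injective d :=
    Subtype.val_injective.comp (e.symm.injective.comp (Sum.inl_injective.comp hf))
  have hcompl : ∀ x, (e.symm (.inr x) : X) ∉ range d := by
    rintro x ⟨j, hj⟩
    simp [d, Subtype.val_inj] at hj
  refine ⟨d, hd, range_subset_iff.2 fun j => (e.symm _).2, le_antisymm (mk_set_le _) ?_⟩
  exact mk_le_of_injective (f := fun x => ⟨e.symm (.inr x), hcompl x⟩) fun x y hxy => by
    simpa [Subtype.val_inj] using hxy

lemma exists_pairs_mk_compl_eq {X I : Type*} [Infinite X] {E : Set (X × X)} {a b : I → X}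
    (ha : Function.Injective a) (hb : Function.Injective b)
    (hab : Disjoint (range a) (range b)) (hE : ∀ i, (a i, b i) ∈ E) :
    ∃ c : I ⊕ I → X, Function.Injective c ∧ (∀ i, (c (.inl i), c (.inr i)) ∈ E) ∧
      #↥(range c)ᶜ = #X := by
  have hne : ∀ i j, a i ≠ b j := disjoint_range_iff.mp hab
  rcases finite_or_infinite I with hI | hI
  · refine ⟨Sum.elim a b, ha.sumElim hb hne, hE, mk_compl_of_infinite _ ?_⟩
    exact (lt_aleph0_of_finite _).trans_le (aleph0_le_mk X)
  · obtain ⟨j⟩ : Nonempty (I ⊕ I ≃ I) := by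
      rw [← Cardinal.eq, ← add_def, add_eq_self (aleph0_le_mk I)]
    have hj : Function.Injective (j ∘ .inl) := j.injective.comp Sum.inl_injective
    let c : I ⊕ I → X := Sum.elim (a ∘ j ∘ .inl) (b ∘ j ∘ .inl)
    have hc : Function.Injective c := (ha.comp hj).sumElim (hb.comp hj) fun _ _ => hne _ _
    have hcompl : ∀ i, a (j (.inr i)) ∉ range c := by
      rintro i ⟨k | k, hk⟩
      · simpa using j.injective (ha hk)
      · exact hne _ _ hk.symm
    refine ⟨c, hc, fun i => hE _, mk_compl_eq_of_mk_le_mk_compl ?_⟩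
    let into_compl : I → ↥(range c)ᶜ := fun i => ⟨a (j (.inr i)), hcompl i⟩
    have h_into : Function.Injective into_compl := fun i k hik => by
      simpa [into_compl] using ha (congrArg Subtype.val hik)
    exact mk_le_of_injective
      (h_into.comp (j.injective.comp (Equiv.ofInjective c hc).symm.injective))

theorem exists_sequences_in_Y_general {X : Type*} [Infinite X]
    (𝓔 : Set (Set (X × X)))
    (hmu : ∀ f : Equiv.Perm X, MacroUniform 𝓔 (⇑f))
    (Y : Set X) (hY : Cardinal.mk Y = Cardinal.mk X)
    (lam : Cardinal) (E : Set (X × X)) (hE : E ∈ 𝓔)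
    (a b : Quotient.out lam → X)
    (ha : Function.Injective a) (hb : Function.Injective b)
    (hab : Disjoint (Set.range a) (Set.range b))
    (hE' : ∀ α, (a α, b α) ∈ E) :
    ∃ x y : Quotient.out lam → X,
      Function.Injective x ∧ Function.Injective y ∧
      Set.range x ⊆ Y ∧ Set.range y ⊆ Y ∧
      Disjoint (Set.range x) (Set.range y) ∧
      ∃ H ∈ 𝓔, ∀ α, (x α, y α) ∈ H := by
  obtain ⟨c, hc, hcE, hc_compl⟩ := exists_pairs_mk_compl_eq ha hb hab hE'
  obtain ⟨d, hd, hdY, hd_compl⟩ := exists_injective_range_subset_mk_compl_eq hY hc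
  obtain ⟨e⟩ := Cardinal.eq.1 (hc_compl.trans hd_compl.symm)
  obtain ⟨g, hg⟩ := exists_perm_comp_eq hc hd e
  obtain ⟨H, hH, hgH⟩ := hmu g E hE
  refine ⟨d ∘ .inl, d ∘ .inr, hd.comp Sum.inl_injective, hd.comp Sum.inr_injective,
    (range_comp_subset_range _ d).trans hdY, (range_comp_subset_range _ d).trans hdY, ?_,
    H, hH, fun i => ?_⟩
  · rw [range_comp, range_comp]
    exact disjoint_image_of_injective hd isCompl_range_inl_range_inr.disjoint
  · simpa only [Function.comp_apply, ← hg] using hgH _ _ (hcE i)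

theorem exists_sequences_in_Y {X : Type*} [Infinite X]
    (𝓔 : Set (Set (X × X))) (h : IsCoarse 𝓔)
    (hmu : ∀ f : Equiv.Perm X, MacroUniform 𝓔 (⇑f))
    (Y : Set X) (hY : Cardinal.mk Y = Cardinal.mk X)
    (lam : Cardinal) (E : Set (X × X)) (hE : E ∈ 𝓔)
    (a b : Quotient.out lam → X)
    (ha : Function.Injective a) (hb : Function.Injective b)
    (hab : Disjoint (Set.range a) (Set.range b))
    (hE' : ∀ α, (a α, b α) ∈ E) :
    ∃ x y : Quotient.out lam → X,
      Function.Injective x ∧ Function.Injective y ∧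
      Set.range x ⊆ Y ∧ Set.range y ⊆ Y ∧
      Disjoint (Set.range x) (Set.range y) ∧
      ∃ H ∈ 𝓔, ∀ α, (x α, y α) ∈ H :=
  exists_sequences_in_Y_general 𝓔 hmu Y hY lam E hE a b ha hb hab hE'
end

section
/- Let (X, 𝓔) be an infinite finitary coarse space in which every permutation of X is an asymorphism. Then there exists an infinite cardinal κ ≤ |X|⁺ such that the group of permutations compatible with 𝓔 equals S_X^{<κ}. -/
open Set

/-!
Since every permutation is an asymorphism, a permutation `a` is compatible as soon as some
conjugate `F a F⁻¹` is. Compatible permutations form a group containing all permutations of finite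
support, so it suffices to show that a compatible `g` with infinite support makes every `p` with
`|supp p| ≤ |supp g|` compatible: `κ` is then the least support size of a non-compatible
permutation, or `|X|⁺` if there is none.

On each of its orbits `p` is the composite of two reflections, so `p` is a product of two
involutions supported in `supp p`. An involution `c` with support of infinite size `μ` is in turn
a product of two involutions, each swapping `μ` pairs and fixing `|X|` points. Any such
involution is conjugate to the one swapping `z` and `g z` for `z` in a set of `μ` points taken
from a transversal of `g` and leaving `|X|` points fixed; that involution is compatible because
its graph lies in `E ∘ E⁻¹` for any entourage `E` containing the graph of `g`.
-/

open Cardinal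

section CardinalArith

variable {X : Type*}

theorem Cardinal.mk_eq_of_mk_compl_le {A : Set X} (hA : ℵ₀ ≤ #A) (hAc : #(Aᶜ : Set X) ≤ #A) :
    #A = #X :=
  le_antisymm (mk_set_le A) <| calc
    #X = #A + #(Aᶜ : Set X) := (mk_sum_compl A).symm
    _ ≤ #A + #A := by gcongr
    _ = #A := add_eq_self hA

theorem Cardinal.exists_subset_mk_eq_mk_sdiff_eq {S : Set X} (hS : ℵ₀ ≤ #S) :
    ∃ S₁ ⊆ S, #S₁ = #S ∧ #(S \ S₁ : Set X) = #S := by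
  obtain ⟨e⟩ : Nonempty (S ⊕ S ≃ S) := Cardinal.eq.1 (by simp [add_eq_self hS])
  let f : S ⊕ S → X := Subtype.val ∘ e
  have hf : Function.Injective f := Subtype.val_injective.comp e.injective
  have hrange : Set.range f = S := by simp [f, Set.range_comp, e.range_eq_univ]
  have hdiff : S \ f '' Set.range Sum.inl = f '' Set.range Sum.inr := by
    rw [← Set.compl_range_inl, ← Set.range_sdiff_image hf, hrange]
  refine ⟨f '' Set.range Sum.inl, (Set.image_subset_range _ _).trans hrange.le, ?_, ?_⟩
  · rw [mk_image_eq hf, mk_range_eq _ Sum.inl_injective]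
  · rw [hdiff, mk_image_eq hf, mk_range_eq _ Sum.inr_injective]

end CardinalArith

namespace Equiv.Perm

variable {X : Type*}

theorem exists_transversal (σ : Perm X) :
    ∃ T ⊆ psupp σ, (∀ t ∈ T, σ t ∉ T) ∧ ∀ x ∈ psupp σ, x ∈ T ∨ σ x ∈ T ∨ σ⁻¹ x ∈ T := by
  let S : Set (Set X) := {T | T ⊆ psupp σ ∧ ∀ t ∈ T, σ t ∉ T}
  obtain ⟨T, hT⟩ := zorn_subset S fun c hcS hc => by
    refine ⟨⋃₀ c, ⟨sUnion_subset fun T hT => (hcS hT).1, ?_⟩, fun T => subset_sUnion_of_mem⟩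
    rintro t ⟨A, hA, htA⟩ ⟨B, hB, htB⟩
    rcases hc.total hA hB with hAB | hBA
    · exact (hcS hB).2 t (hAB htA) htB
    · exact (hcS hA).2 t htA (hBA htB)
  refine ⟨T, hT.prop.1, hT.prop.2, fun x hx => ?_⟩
  by_contra! hxT
  have hins : insert x T ∈ S := by
    refine ⟨insert_subset hx hT.prop.1, ?_⟩
    rintro t (rfl | ht) (hσt | hσt)
    · exact hx hσt
    · exact hxT.2.1 hσt
    · exact hxT.2.2 (by simp [← hσt, ht])
    · exact hT.prop.2 t ht hσt
  exact hxT.1 (hT.eq_of_subset hins (subset_insert x T) ▸ mem_insert x T)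

theorem mk_transversal_eq {σ : Perm X} {T : Set X} (hT : T ⊆ psupp σ)
    (hcov : ∀ x ∈ psupp σ, x ∈ T ∨ σ x ∈ T ∨ σ⁻¹ x ∈ T) (hinf : ℵ₀ ≤ #(psupp σ)) :
    #T = #(psupp σ) := by
  have hsub : psupp σ ⊆ T ∪ σ ⁻¹' T ∪ ⇑σ⁻¹ ⁻¹' T := fun x hx => by
    rcases hcov x hx with h | h | h
    exacts [Or.inl (Or.inl h), Or.inl (Or.inr h), Or.inr h]
  have hle : #(psupp σ) ≤ #T + #T + #T := calc
    #(psupp σ) ≤ #(T ∪ σ ⁻¹' T ∪ ⇑σ⁻¹ ⁻¹' T : Set X) := mk_le_mk_of_subset hsub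
    _ ≤ #T + #(σ ⁻¹' T) + #(⇑σ⁻¹ ⁻¹' T) :=
      (mk_union_le _ _).trans (add_le_add_left (mk_union_le _ _) _)
    _ = #T + #T + #T := by rw [mk_preimage_equiv, mk_preimage_equiv]
  have hTinf : ℵ₀ ≤ #T := by
    by_contra! hfin
    exact (hle.trans_lt (add_lt_aleph0 (add_lt_aleph0 hfin hfin) hfin)).not_ge hinf
  refine le_antisymm (mk_le_mk_of_subset hT) ?_
  rwa [add_eq_self hTinf, add_eq_self hTinf] at hle

section SwapOn

variable {σ τ : Perm X} {T T' : Set X}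

theorem notMem_of_symm_apply_mem (hT : ∀ t ∈ T, σ t ∉ T) {x : X} (hx : σ.symm x ∈ T) : x ∉ T := by
  simpa using hT _ hx

open Classical in
noncomputable def swapOn (σ : Perm X) (T : Set X) (hT : ∀ t ∈ T, σ t ∉ T) : Perm X :=
  Function.Involutive.toPerm (fun x => if x ∈ T then σ x else if σ.symm x ∈ T then σ.symm x else x)
    fun x => by
      by_cases hx : x ∈ T <;> by_cases hx' : σ.symm x ∈ T <;>
        simp [hx, hx', hT]

section

variable (hT : ∀ t ∈ T, σ t ∉ T)

open Classical in
theorem swapOn_apply (x : X) :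
    swapOn σ T hT x = if x ∈ T then σ x else if σ.symm x ∈ T then σ.symm x else x :=
  rfl

theorem swapOn_apply_of_mem {x : X} (hx : x ∈ T) : swapOn σ T hT x = σ x := by
  simp [swapOn_apply, hx]

theorem swapOn_apply_of_symm_apply_mem {x : X} (hx : σ.symm x ∈ T) :
    swapOn σ T hT x = σ.symm x := by
  simp [swapOn_apply, hx, notMem_of_symm_apply_mem hT hx]

theorem swapOn_apply_of_notMem {x : X} (hx : x ∉ T) (hx' : σ.symm x ∉ T) :
    swapOn σ T hT x = x := by
  simp [swapOn_apply, hx, hx']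

theorem swapOn_eq_of_involutive (hσ : Function.Involutive σ)
    (hcov : ∀ x ∈ psupp σ, x ∈ T ∨ σ x ∈ T) : swapOn σ T hT = σ := by
  have hsymm : ∀ x, σ.symm x = σ x := fun x => σ.symm_apply_eq.2 (hσ x).symm
  ext x
  by_cases hx : x ∈ T
  · exact swapOn_apply_of_mem hT hx
  by_cases hx' : σ x ∈ T
  · rw [swapOn_apply_of_symm_apply_mem hT (by rwa [hsymm]), hsymm]
  rw [swapOn_apply_of_notMem hT hx (by rwa [hsymm])]
  by_contra hσx
  exact (hcov x (Ne.symm hσx)).elim hx hx'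

theorem swapOn_eq_mul_swapOn_sdiff {T₁ : Set X} (hT₁ : T₁ ⊆ T) :
    swapOn σ T hT = swapOn σ T₁ (fun t ht h => hT t (hT₁ ht) (hT₁ h)) *
      swapOn σ (T \ T₁) (fun t ht h => hT t ht.1 h.1) := by
  ext x
  have h₁ := hT x
  have h₂ := notMem_of_symm_apply_mem hT (x := x)
  have h₃ := notMem_of_symm_apply_mem hT (x := σ.symm x)
  simp only [swapOn_apply, Perm.mul_apply, mem_sdiff]
  grind

end

open Classical in
noncomputable def swapOnConjFun (σ τ : Perm X) (T T' : Set X) (e : T ≃ T')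
    (f : ((T ∪ σ '' T)ᶜ : Set X) ≃ ((T' ∪ τ '' T')ᶜ : Set X)) (x : X) : X :=
  if hx : x ∈ T then e ⟨x, hx⟩
  else if hx' : σ.symm x ∈ T then τ (e ⟨σ.symm x, hx'⟩)
  else f ⟨x, by simp [mem_image_equiv, hx, hx']⟩

theorem swapOnConjFun_leftInverse (hT' : ∀ t ∈ T', τ t ∉ T') (e : T ≃ T')
    (f : ((T ∪ σ '' T)ᶜ : Set X) ≃ ((T' ∪ τ '' T')ᶜ : Set X)) :
    Function.LeftInverse (swapOnConjFun τ σ T' T e.symm f.symm) (swapOnConjFun σ τ T T' e f) := by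
  intro x
  by_cases hx : x ∈ T
  · simp [swapOnConjFun, hx]
  by_cases hx' : σ.symm x ∈ T
  · simp [swapOnConjFun, hx, hx', hT' _ (e _).2]
  have hfx := (f ⟨x, by simp [mem_image_equiv, hx, hx']⟩).2
  simp only [mem_compl_iff, mem_union, mem_image_equiv, not_or] at hfx
  simp [swapOnConjFun, hx, hx', hfx]

theorem swapOnConjFun_semiconj (hT : ∀ t ∈ T, σ t ∉ T) (hT' : ∀ t ∈ T', τ t ∉ T') (e : T ≃ T')
    (f : ((T ∪ σ '' T)ᶜ : Set X) ≃ ((T' ∪ τ '' T')ᶜ : Set X)) :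
    Function.Semiconj (swapOnConjFun σ τ T T' e f) (swapOn σ T hT) (swapOn τ T' hT') := by
  intro x
  by_cases hx : x ∈ T
  · rw [swapOn_apply_of_mem hT hx]
    simp [swapOnConjFun, hx, hT x hx, swapOn_apply_of_mem hT' (e _).2]
  by_cases hx' : σ.symm x ∈ T
  · rw [swapOn_apply_of_symm_apply_mem hT hx']
    simp [swapOnConjFun, hx, hx', swapOn_apply_of_symm_apply_mem hT']
  have hfx := (f ⟨x, by simp [mem_image_equiv, hx, hx']⟩).2
  simp only [mem_compl_iff, mem_union, mem_image_equiv, not_or] at hfx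
  rw [swapOn_apply_of_notMem hT hx hx']
  simp [swapOnConjFun, hx, hx', swapOn_apply_of_notMem hT' hfx.1 hfx.2]

theorem exists_semiconj_swapOn (hT : ∀ t ∈ T, σ t ∉ T) (hT' : ∀ t ∈ T', τ t ∉ T')
    (hcard : #T = #T') (hfix : #((T ∪ σ '' T)ᶜ : Set X) = #((T' ∪ τ '' T')ᶜ : Set X)) :
    ∃ F : Perm X, Function.Semiconj F (swapOn σ T hT) (swapOn τ T' hT') := by
  obtain ⟨e⟩ := Cardinal.eq.1 hcard
  obtain ⟨f⟩ := Cardinal.eq.1 hfix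
  exact ⟨⟨_, _, swapOnConjFun_leftInverse hT' e f, swapOnConjFun_leftInverse hT e.symm f.symm⟩,
    swapOnConjFun_semiconj hT hT' e f⟩

theorem mk_compl_union_image_eq {U : Set X} (hT : ∀ t ∈ T, σ t ∉ T) (hUT : U ⊆ T) (hU : ℵ₀ ≤ #U)
    (hUdiff : #U ≤ #(T \ U : Set X)) : #((U ∪ σ '' U)ᶜ : Set X) = #X := by
  have hdisj : T \ U ⊆ (U ∪ σ '' U)ᶜ := by
    rintro x ⟨hxT, hxU⟩ (hx | ⟨u, hu, rfl⟩)
    exacts [hxU hx, hT u (hUT hu) hxT]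
  have hsmall : #(U ∪ σ '' U : Set X) ≤ #U := calc
    #(U ∪ σ '' U : Set X) ≤ #U + #(σ '' U) := mk_union_le _ _
    _ ≤ #U + #U := by gcongr; exact mk_image_le
    _ = #U := add_eq_self hU
  have hbig : #U ≤ #((U ∪ σ '' U)ᶜ : Set X) := hUdiff.trans (mk_le_mk_of_subset hdisj)
  refine mk_eq_of_mk_compl_le (hU.trans hbig) ?_
  rw [compl_compl]
  exact hsmall.trans hbig

theorem exists_mk_eq_mk_compl_union_image_eq (g : Perm X) {μ : Cardinal} (hμ : ℵ₀ ≤ μ)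
    (hμg : μ ≤ #(psupp g)) :
    ∃ Z : Set X, (∀ z ∈ Z, g z ∉ Z) ∧ #Z = μ ∧ #((Z ∪ g '' Z)ᶜ : Set X) = #X := by
  obtain ⟨T, hTg, hT, hTcov⟩ := g.exists_transversal
  have hTcard := mk_transversal_eq hTg hTcov (hμ.trans hμg)
  obtain ⟨T₁, hT₁T, hT₁, hTT₁⟩ := exists_subset_mk_eq_mk_sdiff_eq (hTcard ▸ hμ.trans hμg)
  obtain ⟨Z, hZT₁, hZ⟩ := le_mk_iff_exists_subset.1 (hT₁ ▸ hTcard ▸ hμg)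
  refine ⟨Z, fun z hz h => hT z (hT₁T (hZT₁ hz)) (hT₁T (hZT₁ h)), hZ,
    mk_compl_union_image_eq hT (hZT₁.trans hT₁T) (hZ ▸ hμ) ?_⟩
  calc #Z ≤ #(T \ T₁ : Set X) := by rw [hZ, hTT₁, hTcard]; exact hμg
    _ ≤ #(T \ Z : Set X) := mk_le_mk_of_subset (sdiff_subset_sdiff_right hZT₁)

end SwapOn

section CycleReflect

variable (h : Perm X)

noncomputable def cycleRep (x : X) : X :=
  (Quotient.mk (SameCycle.setoid h) x).out

theorem sameCycle_cycleRep (x : X) : h.SameCycle (h.cycleRep x) x :=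
  Quotient.mk_out (s := SameCycle.setoid h) x

theorem cycleRep_eq_of_sameCycle {x y : X} (hxy : h.SameCycle x y) : h.cycleRep x = h.cycleRep y :=
  congrArg Quotient.out (Quotient.sound (s := SameCycle.setoid h) hxy)

noncomputable def cycleIndex (x : X) : ℤ :=
  (h.sameCycle_cycleRep x).choose

theorem zpow_cycleIndex_apply (x : X) : (h ^ h.cycleIndex x) (h.cycleRep x) = x :=
  (h.sameCycle_cycleRep x).choose_spec

/-- In the coordinates `k ↦ (h ^ k) (h.cycleRep x)` on the orbit of `x`, the reflection
`k ↦ m - k`. -/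
noncomputable def cycleReflect (m : ℤ) (x : X) : X :=
  (h ^ (m - h.cycleIndex x)) (h.cycleRep x)

theorem cycleReflect_apply (m : ℤ) (x : X) :
    h.cycleReflect m x = (h ^ (m - h.cycleIndex x)) (h.cycleRep x) :=
  rfl

theorem cycleReflect_zpow_apply (m k : ℤ) (x : X) :
    h.cycleReflect m ((h ^ k) (h.cycleRep x)) = (h ^ (m - k)) (h.cycleRep x) := by
  have hrep : h.cycleRep ((h ^ k) (h.cycleRep x)) = h.cycleRep x :=
    (h.cycleRep_eq_of_sameCycle ⟨k, rfl⟩).symm.trans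
      (h.cycleRep_eq_of_sameCycle (h.sameCycle_cycleRep x))
  have hk := h.zpow_cycleIndex_apply ((h ^ k) (h.cycleRep x))
  rw [hrep] at hk
  rw [cycleReflect_apply, hrep]
  generalize h.cycleIndex ((h ^ k) (h.cycleRep x)) = j at hk ⊢
  calc (h ^ (m - j)) (h.cycleRep x) = (h ^ (m - j - k)) ((h ^ k) (h.cycleRep x)) := by
        rw [← mul_apply, ← zpow_add, sub_add_cancel]
    _ = (h ^ (m - k)) (h.cycleRep x) := by
        rw [← hk, ← mul_apply, ← zpow_add]
        congr 2
        ring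

theorem cycleReflect_involutive (m : ℤ) : Function.Involutive (h.cycleReflect m) := fun x => by
  rw [cycleReflect_apply h m x, cycleReflect_zpow_apply, sub_sub_cancel, zpow_cycleIndex_apply]

theorem cycleReflect_add_one_apply_cycleReflect (m : ℤ) (x : X) :
    h.cycleReflect (m + 1) (h.cycleReflect m x) = h x := by
  rw [cycleReflect_apply h m x, cycleReflect_zpow_apply,
    show m + 1 - (m - h.cycleIndex x) = 1 + h.cycleIndex x by ring, zpow_add, zpow_one, mul_apply,
    zpow_cycleIndex_apply]

theorem cycleReflect_apply_of_apply_eq (m : ℤ) {x : X} (hx : h x = x) : h.cycleReflect m x = x := by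
  have hfix := zpow_apply_eq_self_of_apply_eq_self hx
  have hrep : h.cycleRep x = x :=
    (h ^ h.cycleIndex x).injective ((h.zpow_cycleIndex_apply x).trans (hfix _).symm)
  rw [cycleReflect_apply, hrep, hfix]

theorem exists_involutive_mul_eq :
    ∃ a b : Perm X, Function.Involutive a ∧ Function.Involutive b ∧ b * a = h ∧
      psupp a ⊆ psupp h ∧ psupp b ⊆ psupp h := by
  refine ⟨(h.cycleReflect_involutive 0).toPerm, (h.cycleReflect_involutive 1).toPerm,
    h.cycleReflect_involutive 0, h.cycleReflect_involutive 1, ?_, ?_, ?_⟩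
  · ext x
    exact h.cycleReflect_add_one_apply_cycleReflect 0 x
  all_goals
    intro x hx hhx
    exact hx (h.cycleReflect_apply_of_apply_eq _ hhx)

end CycleReflect

end Equiv.Perm

section Compatible

open Equiv Perm

variable {X : Type*} {𝓔 : Set (Set (X × X))}

theorem IsCoarse.exists_finset_subset (h𝓔 : IsCoarse 𝓔) [Nonempty X] (P : Finset (X × X)) :
    ∃ s ∈ 𝓔, ↑P ⊆ s := by
  classical
  induction P using Finset.induction with
  | empty =>
    obtain ⟨s, hs, -⟩ := h𝓔.cover (Classical.arbitrary X, Classical.arbitrary X)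
    exact ⟨s, hs, by simp⟩
  | @insert p P _ ih =>
    obtain ⟨s, hs, hPs⟩ := ih
    obtain ⟨s', hs', hps'⟩ := h𝓔.cover p
    refine ⟨relComp s' s, h𝓔.comp s' hs' s hs, ?_⟩
    rintro q hq
    rcases Finset.mem_insert.1 hq with rfl | hq
    · exact ⟨q.2, hps', h𝓔.refl s hs q.2⟩
    · exact ⟨q.1, h𝓔.refl s' hs' q.1, hPs hq⟩

theorem compatible_of_finite_psupp (h𝓔 : IsCoarse 𝓔) [Nonempty X] {g : Perm X}
    (hg : (psupp g).Finite) : Compatible 𝓔 g := by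
  classical
  obtain ⟨s, hs, hgs⟩ := h𝓔.exists_finset_subset (hg.toFinset.image fun x => (x, g x))
  refine ⟨s, hs, fun x => ?_⟩
  by_cases hx : g x = x
  · rw [hx]; exact h𝓔.refl s hs x
  · exact hgs (by simpa [psupp] using hx)

theorem Compatible.mul (h𝓔 : IsCoarse 𝓔) {g g' : Perm X} (hg : Compatible 𝓔 g)
    (hg' : Compatible 𝓔 g') : Compatible 𝓔 (g * g') := by
  obtain ⟨s, hs, hgs⟩ := hg
  obtain ⟨s', hs', hgs'⟩ := hg'
  exact ⟨relComp s' s, h𝓔.comp s' hs' s hs, fun x => ⟨g' x, hgs' x, hgs (g' x)⟩⟩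

theorem Compatible.of_semiconj {F a b : Perm X} (hF : MacroUniform 𝓔 F.symm)
    (hab : Function.Semiconj F a b) (hb : Compatible 𝓔 b) : Compatible 𝓔 a := by
  obtain ⟨s, hs, hbs⟩ := hb
  obtain ⟨t, ht, hst⟩ := hF s hs
  exact ⟨t, ht, fun x => by simpa [← hab x] using hst _ _ (hbs (F x))⟩

theorem Compatible.swapOn (h𝓔 : IsCoarse 𝓔) {σ : Perm X} {T : Set X} (hT : ∀ t ∈ T, σ t ∉ T)
    (hσ : Compatible 𝓔 σ) : Compatible 𝓔 (σ.swapOn T hT) := by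
  obtain ⟨s, hs, hσs⟩ := hσ
  refine ⟨relComp s (relInv s), h𝓔.comp s hs _ (h𝓔.inv s hs), fun x => ?_⟩
  rw [swapOn_apply]
  split_ifs
  · exact ⟨σ x, hσs x, h𝓔.refl s hs _⟩
  · exact ⟨x, h𝓔.refl s hs x, by simpa [relInv] using hσs (σ.symm x)⟩
  · exact ⟨x, h𝓔.refl s hs x, h𝓔.refl s hs x⟩

theorem Compatible.swapOn_of_mk_le (h𝓔 : IsCoarse 𝓔) (hasym : ∀ f : Perm X, IsAsymorphism 𝓔 f)
    {g σ : Perm X} (hg : Compatible 𝓔 g) {U : Set X} (hU : ∀ u ∈ U, σ u ∉ U) (hUinf : ℵ₀ ≤ #U)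
    (hUg : #U ≤ #(psupp g)) (hfix : #((U ∪ σ '' U)ᶜ : Set X) = #X) :
    Compatible 𝓔 (σ.swapOn U hU) := by
  obtain ⟨Z, hZ, hZcard, hZfix⟩ := g.exists_mk_eq_mk_compl_union_image_eq hUinf hUg
  obtain ⟨F, hF⟩ := exists_semiconj_swapOn hU hZ hZcard.symm (hfix.trans hZfix.symm)
  exact (hg.swapOn h𝓔 hZ).of_semiconj (hasym F).2 hF

theorem Compatible.of_involutive (h𝓔 : IsCoarse 𝓔) (hasym : ∀ f : Perm X, IsAsymorphism 𝓔 f)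
    {g c : Perm X} (hg : Compatible 𝓔 g) (hginf : ℵ₀ ≤ #(psupp g)) (hc : Function.Involutive c)
    (hcg : #(psupp c) ≤ #(psupp g)) : Compatible 𝓔 c := by
  obtain ⟨x, -⟩ := (infinite_coe_iff.1 (infinite_iff.2 hginf)).nonempty
  have : Nonempty X := ⟨x⟩
  by_cases hfin : (psupp c).Finite
  · exact compatible_of_finite_psupp h𝓔 hfin
  have hcinf : ℵ₀ ≤ #(psupp c) := infinite_iff.1 (infinite_coe_iff.2 hfin)
  obtain ⟨T, hTc, hT, hTcov⟩ := c.exists_transversal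
  have hTcard := mk_transversal_eq hTc hTcov hcinf
  obtain ⟨T₁, hT₁T, hT₁, hTT₁⟩ := exists_subset_mk_eq_mk_sdiff_eq (hTcard ▸ hcinf)
  have hTT₁' : #(T \ (T \ T₁) : Set X) = #T := by rwa [sdiff_sdiff_cancel_left hT₁T]
  have half : ∀ U ⊆ T, #U = #T → #(T \ U : Set X) = #T → ∀ hU : ∀ u ∈ U, c u ∉ U,
      Compatible 𝓔 (c.swapOn U hU) := fun U hUT hU hTU hUc =>
    hg.swapOn_of_mk_le h𝓔 hasym hUc (hU ▸ hTcard ▸ hcinf) (hU ▸ hTcard ▸ hcg)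
      (mk_compl_union_image_eq hT hUT (hU ▸ hTcard ▸ hcinf) (hTU ▸ hU).le)
  have hcov : ∀ x ∈ psupp c, x ∈ T ∨ c x ∈ T := fun x hx => by
    simpa [← c.symm_apply_eq.2 (hc x).symm] using hTcov x hx
  rw [← swapOn_eq_of_involutive hT hc hcov, swapOn_eq_mul_swapOn_sdiff hT hT₁T]
  exact (half T₁ hT₁T hT₁ hTT₁ _).mul h𝓔 (half (T \ T₁) sdiff_subset hTT₁ hTT₁' _)

theorem Compatible.of_mk_psupp_le (h𝓔 : IsCoarse 𝓔) (hasym : ∀ f : Perm X, IsAsymorphism 𝓔 f)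
    {g p : Perm X} (hg : Compatible 𝓔 g) (hginf : ℵ₀ ≤ #(psupp g))
    (hpg : #(psupp p) ≤ #(psupp g)) : Compatible 𝓔 p := by
  obtain ⟨a, b, ha, hb, rfl, has, hbs⟩ := p.exists_involutive_mul_eq
  exact (hg.of_involutive h𝓔 hasym hginf hb ((mk_le_mk_of_subset hbs).trans hpg)).mul h𝓔
    (hg.of_involutive h𝓔 hasym hginf ha ((mk_le_mk_of_subset has).trans hpg))

end Compatible

theorem compatible_eq_suppLT_general {X : Type*} [Infinite X]
    (𝓔 : Set (Set (X × X))) (h : IsCoarse 𝓔)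
    (hasym : ∀ h : Equiv.Perm X, IsAsymorphism 𝓔 h) :
    ∃ κ : Cardinal, Cardinal.aleph0 ≤ κ ∧
      κ ≤ Order.succ (Cardinal.mk X) ∧
      {g : Equiv.Perm X | Compatible 𝓔 g} = SuppLT X κ := by
  by_cases hall : ∀ g, Compatible 𝓔 g
  · refine ⟨Order.succ #X, (aleph0_le_mk X).trans (Order.le_succ _), le_rfl, ?_⟩
    ext g
    simp [SuppLT, hall, mk_set_le]
  obtain ⟨g₀, hg₀, hmin⟩ :=
    (InvImage.wf (fun g => #(psupp g)) Cardinal.lt_wf).has_min {g | ¬Compatible 𝓔 g}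
      (not_forall.1 hall)
  have hg₀inf : ℵ₀ ≤ #(psupp g₀) := by
    by_contra! hfin
    exact hg₀ (compatible_of_finite_psupp h (lt_aleph0_iff_set_finite.1 hfin))
  refine ⟨#(psupp g₀), hg₀inf, (mk_set_le _).trans (Order.le_succ _),
    Set.ext fun g => ⟨fun hg => ?_, fun hlt => ?_⟩⟩
  · exact not_le.1 fun hle => hg₀ (hg.of_mk_psupp_le h hasym (hg₀inf.trans hle) hle)
  · exact not_not.1 fun hg => hmin g hg hlt

theorem compatible_eq_suppLT {X : Type*} [Infinite X]
    (𝓔 : Set (Set (X × X))) (h : IsCoarse 𝓔) (hfin : Finitary 𝓔)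
    (hasym : ∀ h : Equiv.Perm X, IsAsymorphism 𝓔 h) :
    ∃ κ : Cardinal, Cardinal.aleph0 ≤ κ ∧
      κ ≤ Order.succ (Cardinal.mk X) ∧
      {g : Equiv.Perm X | Compatible 𝓔 g} = SuppLT X κ :=
  compatible_eq_suppLT_general 𝓔 h hasym
end
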